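/- If G is a graph of diameter 2, then χ_μ(G) ≤ χ_1(G), where χ_1(G) is the 1-defective chromatic number. -/

import Mathlib

open SimpleGraph

variable {V W : Type*}

/-- Two vertices of `X` are `X`-visible if some geodesic between them has all
internal vertices outside `X`; `X` is a mutual-visibility set if this holds
for every reachable pair of vertices of `X`. -/
def IsMVSet (G : SimpleGraph V) (X : Set V) : Prop :=
  ∀ x ∈ X, ∀ y ∈ X, x ≠ y → G.Reachable x y →
    ∃ p : G.Walk x y, p.length = G.dist x y ∧
      ∀ z ∈ p.support, z ≠ x → z ≠ y → z ∉ X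

/-- An independent mutual-visibility set. -/
def IsIMVSet (G : SimpleGraph V) (X : Set V) : Prop :=
  (∀ x ∈ X, ∀ y ∈ X, ¬ G.Adj x y) ∧ IsMVSet G X

/-- The mutual-visibility chromatic number: the least `k` such that the vertex
set partitions into `k` mutual-visibility sets. -/
noncomputable def mvChrom (G : SimpleGraph V) : ℕ :=
  sInf {k | ∃ f : V → Fin k, ∀ i, IsMVSet G (f ⁻¹' {i})}

/-- The independent mutual-visibility chromatic number. -/
noncomputable def imvChrom (G : SimpleGraph V) : ℕ :=
  sInf {k | ∃ f : V → Fin k, ∀ i, IsIMVSet G (f ⁻¹' {i})}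

/-- The chromatic number, as a natural number. -/
noncomputable def chromNat (G : SimpleGraph V) : ℕ :=
  sInf {k | G.Colorable k}

/-- The independent mutual-visibility number `μᵢ(G)`. -/
noncomputable def imvNum (G : SimpleGraph V) : ℕ :=
  sSup {n | ∃ s : Finset V, IsIMVSet G ↑s ∧ s.card = n}

/-- The independence number `α(G)`. -/
noncomputable def indepNum (G : SimpleGraph V) : ℕ :=
  sSup {n | ∃ s : Finset V, (∀ x ∈ s, ∀ y ∈ s, ¬ G.Adj x y) ∧ s.card = n}

/-- The 1-defective chromatic number `χ₁(G)`: the least `k` admitting a `k`-coloring in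
which every vertex has at most one neighbor of its own color. -/
noncomputable def defChrom1 (G : SimpleGraph V) : ℕ :=
  sInf {k | ∃ f : V → Fin k, ∀ v : V, {w | G.Adj v w ∧ f w = f v}.Subsingleton}

/-!
In a geodesic of length at most two every internal vertex is adjacent to both ends. So if two
vertices `x ≠ y` of a color class of a 1-defective coloring were blocked by an internal vertex
`z` of the same class, `z` would have the two neighbors `x` and `y` of its own color.
-/

variable {G : SimpleGraph V}

theorem SimpleGraph.Walk.adj_of_mem_support_of_length_le_two {u v z : V} (p : G.Walk u v)
    (hp : p.length ≤ 2) (hz : z ∈ p.support) (hzu : z ≠ u) (hzv : z ≠ v) :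
    G.Adj u z ∧ G.Adj z v := by
  match p, hp with
  | .nil, _ => simp_all
  | .cons _ .nil, _ => simp_all
  | .cons h₁ (.cons h₂ .nil), _ =>
    obtain rfl : z = _ := by simpa [hzu, hzv] using hz
    exact ⟨h₁, h₂⟩
  | .cons _ (.cons _ (.cons _ _)), hp => simp at hp

theorem isMVSet_of_subsingleton_adj {X : Set V} (hdist : ∀ x ∈ X, ∀ y ∈ X, G.dist x y ≤ 2)
    (hX : ∀ v ∈ X, {w | G.Adj v w ∧ w ∈ X}.Subsingleton) : IsMVSet G X := by
  intro x hx y hy hne hr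
  obtain ⟨p, hp⟩ := hr.exists_walk_length_eq_dist
  refine ⟨p, hp, fun z hz hzx hzy hzX => hne ?_⟩
  obtain ⟨hxz, hzy⟩ :=
    p.adj_of_mem_support_of_length_le_two (hp ▸ hdist x hx y hy) hz hzx hzy
  exact hX z hzX ⟨hxz.symm, hx⟩ ⟨hzy, hy⟩

theorem exists_defective_coloring_defChrom1 [Fintype V] (G : SimpleGraph V) :
    ∃ f : V → Fin (defChrom1 G), ∀ v, {w | G.Adj v w ∧ f w = f v}.Subsingleton :=
  Nat.sInf_mem (s := {k | ∃ f : V → Fin k, ∀ v, {w | G.Adj v w ∧ f w = f v}.Subsingleton})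
    ⟨Fintype.card V, Fintype.equivFin V, fun _ _ ha _ _ =>
      absurd ((Fintype.equivFin V).injective ha.2) ha.1.ne'⟩

theorem stmt15 [Fintype V] (G : SimpleGraph V)
    (hle : ∀ u v : V, G.dist u v ≤ 2) :
    mvChrom G ≤ defChrom1 G := by
  obtain ⟨f, hf⟩ := exists_defective_coloring_defChrom1 G
  refine Nat.sInf_le ⟨f, fun i => isMVSet_of_subsingleton_adj (fun x _ y _ => hle x y) ?_⟩
  intro v hv
  exact (hf v).anti fun w ⟨hvw, hw⟩ => ⟨hvw, hw.trans hv.symm⟩
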